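/- arXiv:1507.06396 — 2 statements merged into one kernel-verified Lean document; each statement's English description precedes it below -/
import Mathlib

section
/- Let X and Y be jointly distributed such that conditional on Y = y, X has the noncentral-exponential density f(x|y) = (1/((1-ρ²)γ)) exp(-(x + ρ² y)/((1-ρ²)γ)) I_0(2ρ√(xy)/((1-ρ²)γ)), and Y has density f_Y(y) = Ψ e^{-Φ y} (Ψ, Φ > 0). Then the marginal density of X is f_X(x) = Ξ e^{-Z x}, where Ξ = Ψ / ((1-ρ²)γ (Φ + ρ²/((1-ρ²)γ))) and Z = 1/((1-ρ²)γ) − ρ²/((1-ρ²)²γ² (Φ + ρ²/((1-ρ²)γ))). -/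
/-!
Expanding the exponential in the integral representation of `I₀` and integrating termwise (the odd
moments of `cos` over `[0, π]` vanish, the even ones are `π (2k)! / (4ᵏ (k!)²)`) gives
`I₀(z) = ∑ (z²/4)ᵏ / (k!)²`. Against `e^{-py}` the `k`-th term of `I₀(2√(qy))` is a Gamma integral
equal to `(q/p)ᵏ / (k! p)`, so `∫₀^∞ e^{-py} I₀(2√(qy)) dy = e^{q/p} / p`. The marginal integral
has this form with `p = Φ + ρ²/((1-ρ²)γ)` and `q = ρ²x/((1-ρ²)γ)²`; collecting the exponents gives
`Ξ` and `Z`.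
-/

open MeasureTheory Real Set

/-- The modified Bessel function of the first kind of order zero, via its integral
representation `I₀(z) = (1/π) ∫_0^π e^{z cos θ} dθ`. -/
noncomputable def besselI0 (z : ℝ) : ℝ :=
  (1 / Real.pi) * ∫ θ in (0 : ℝ)..Real.pi, Real.exp (z * Real.cos θ)

open scoped Nat

theorem integral_cos_pow_odd (k : ℕ) : ∫ θ in (0 : ℝ)..π, cos θ ^ (2 * k + 1) = 0 := by
  induction k with
  | zero => simp
  | succ k ih => rw [show 2 * (k + 1) + 1 = 2 * k + 1 + 2 by ring, integral_cos_pow, ih]; simp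

theorem integral_cos_pow_even (k : ℕ) :
    ∫ θ in (0 : ℝ)..π, cos θ ^ (2 * k) = π * (2 * k)! / (4 ^ k * (k ! : ℝ) ^ 2) := by
  induction k with
  | zero => simp
  | succ k ih =>
    rw [show 2 * (k + 1) = 2 * k + 2 by ring, integral_cos_pow, ih, Nat.factorial_succ (2 * k + 1),
      Nat.factorial_succ (2 * k), Nat.factorial_succ k]
    push_cast
    field_simp
    simp only [sin_pi, sin_zero]
    ring

theorem hasSum_besselI0 (z : ℝ) :
    HasSum (fun k : ℕ => (z ^ 2 / 4) ^ k / (k ! : ℝ) ^ 2) (besselI0 z) := by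
  have hexp : HasSum (fun n : ℕ => ∫ θ in (0 : ℝ)..π, (z * cos θ) ^ n / n !)
      (∫ θ in (0 : ℝ)..π, exp (z * cos θ)) := by
    refine intervalIntegral.hasSum_integral_of_dominated_convergence
      (fun n _ => |z| ^ n / n !) (fun n => by fun_prop) (fun n => ?_)
      (.of_forall fun _ _ => summable_pow_div_factorial |z|) intervalIntegrable_const
      (.of_forall fun θ _ => by simpa [exp_eq_exp_ℝ] using
        NormedSpace.expSeries_div_hasSum_exp (z * cos θ))
    refine .of_forall fun θ _ => ?_
    rw [norm_div, norm_pow, Real.norm_natCast, norm_mul, norm_eq_abs, norm_eq_abs]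
    gcongr
    exact mul_le_of_le_one_right (abs_nonneg z) (abs_cos_le_one θ)
  have hterm (n : ℕ) : ∫ θ in (0 : ℝ)..π, (z * cos θ) ^ n / n !
      = z ^ n / n ! * ∫ θ in (0 : ℝ)..π, cos θ ^ n := by
    rw [← intervalIntegral.integral_const_mul]
    congr 1 with θ
    ring
  have hodd (n : ℕ) (hn : n ∉ range (2 * ·)) :
      1 / π * ∫ θ in (0 : ℝ)..π, (z * cos θ) ^ n / n ! = 0 := by
    obtain ⟨k, rfl⟩ : Odd n := Nat.not_even_iff_odd.mp fun ⟨k, hk⟩ => hn ⟨k, by dsimp only; omega⟩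
    rw [hterm, integral_cos_pow_odd, mul_zero, mul_zero]
  have heven := (Function.Injective.hasSum_iff (mul_right_injective₀ two_ne_zero) hodd).mpr
    (hexp.mul_left (1 / π))
  rw [besselI0]
  convert heven using 2 with k
  rw [Function.comp_apply, hterm, integral_cos_pow_even, div_pow, ← pow_mul]
  field_simp

theorem integrableOn_pow_mul_exp_neg_mul_Ioi {p : ℝ} (hp : 0 < p) (k : ℕ) :
    IntegrableOn (fun y : ℝ => y ^ k * exp (-(p * y))) (Ioi 0) := by
  refine (integrableOn_rpow_mul_exp_neg_mul_rpow (s := k) (neg_one_lt_zero.trans_le k.cast_nonneg)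
    one_pos hp).congr_fun (fun y _ => ?_) measurableSet_Ioi
  simp [rpow_natCast]

theorem integral_pow_mul_exp_neg_mul_Ioi {p : ℝ} (hp : 0 < p) (k : ℕ) :
    ∫ y in Ioi (0 : ℝ), y ^ k * exp (-(p * y)) = k ! / p ^ (k + 1) := by
  have h := integral_rpow_mul_exp_neg_mul_Ioi (a := k + 1) (by positivity) hp
  rw [add_sub_cancel_right, Gamma_nat_eq_factorial, ← Nat.cast_succ, rpow_natCast] at h
  simp_rw [rpow_natCast] at h
  rw [h, one_div_pow, one_div_mul_eq_div]

theorem integral_exp_neg_mul_mul_besselI0 {p q : ℝ} (hp : 0 < p) (hq : 0 ≤ q) :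
    ∫ y in Ioi (0 : ℝ), exp (-(p * y)) * besselI0 (2 * √(q * y)) = exp (q / p) / p := by
  set F : ℕ → ℝ → ℝ := fun k y => q ^ k / (k ! : ℝ) ^ 2 * (y ^ k * exp (-(p * y)))
  have hF_nonneg (k : ℕ) (y : ℝ) (hy : y ∈ Ioi 0) : 0 ≤ F k y := by
    have : 0 < y := hy
    simp only [F]
    positivity
  have hF_int (k : ℕ) : ∫ y in Ioi (0 : ℝ), F k y = (q / p) ^ k / k ! / p := by
    rw [integral_const_mul, integral_pow_mul_exp_neg_mul_Ioi hp, div_pow]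
    field_simp
    ring
  have hF_sum (y : ℝ) (hy : y ∈ Ioi 0) :
      HasSum (fun k => F k y) (exp (-(p * y)) * besselI0 (2 * √(q * y))) := by
    have hqy : (2 * √(q * y)) ^ 2 / 4 = q * y := by
      rw [mul_pow, sq_sqrt (mul_nonneg hq (le_of_lt hy))]
      ring
    have h := (hasSum_besselI0 (2 * √(q * y))).mul_left (exp (-(p * y)))
    rw [hqy] at h
    exact h.congr_fun fun k => by simp only [F]; ring
  have hsum := hasSum_integral_of_summable_integral_norm (μ := volume.restrict (Ioi 0)) (F := F)
    (fun k => (integrableOn_pow_mul_exp_neg_mul_Ioi hp k).const_mul _) (by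
      refine ((summable_pow_div_factorial (q / p)).div_const p).congr fun k => ?_
      rw [← hF_int]
      exact setIntegral_congr_fun measurableSet_Ioi fun y hy =>
        (Real.norm_of_nonneg (hF_nonneg k y hy)).symm)
  rw [setIntegral_congr_fun measurableSet_Ioi fun y hy => (hF_sum y hy).tsum_eq] at hsum
  simp_rw [hF_int] at hsum
  refine hsum.unique ?_
  simpa [exp_eq_exp_ℝ] using (NormedSpace.expSeries_div_hasSum_exp (q / p)).div_const p

theorem marginal_density_outdated_csi_general
    {ρ γ Ψ Φ : ℝ} (hρ0 : 0 ≤ ρ) (hρ1 : ρ < 1) (hγ : 0 < γ) (hΦ : 0 < Φ)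
    (f : ℝ → ℝ → ℝ)
    (hf : ∀ x y, f x y = (1 / ((1 - ρ ^ 2) * γ)) *
        Real.exp (-(x + ρ ^ 2 * y) / ((1 - ρ ^ 2) * γ)) *
        besselI0 (2 * ρ * Real.sqrt (x * y) / ((1 - ρ ^ 2) * γ)))
    (Ξ Z : ℝ)
    (hΞ : Ξ = Ψ / ((1 - ρ ^ 2) * γ * (Φ + ρ ^ 2 / ((1 - ρ ^ 2) * γ))))
    (hZ : Z = 1 / ((1 - ρ ^ 2) * γ)
        - ρ ^ 2 / ((1 - ρ ^ 2) ^ 2 * γ ^ 2 * (Φ + ρ ^ 2 / ((1 - ρ ^ 2) * γ)))) :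
    ∀ x : ℝ, 0 ≤ x →
      (∫ y in Ioi (0 : ℝ), f x y * (Ψ * Real.exp (-Φ * y))) = Ξ * Real.exp (-Z * x) := by
  intro x hx
  have hρ : 0 < 1 - ρ ^ 2 := by nlinarith
  set A := (1 - ρ ^ 2) * γ
  have hA : 0 < A := mul_pos hρ hγ
  set P := Φ + ρ ^ 2 / A
  have hP : 0 < P := by positivity
  set Q := ρ ^ 2 * x / A ^ 2
  have hintegrand (y : ℝ) (hy : y ∈ Ioi 0) : f x y * (Ψ * exp (-Φ * y))
      = Ψ / A * exp (-x / A) * (exp (-(P * y)) * besselI0 (2 * √(Q * y))) := by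
    have harg : 2 * ρ * √(x * y) / A = 2 * √(Q * y) := by
      rw [show Q * y = (ρ * √(x * y) / A) ^ 2 by
          rw [div_pow, mul_pow, sq_sqrt (mul_nonneg hx (le_of_lt hy))]; ring,
        sqrt_sq (by positivity)]
      ring
    have hexp : exp (-(x + ρ ^ 2 * y) / A) * exp (-Φ * y) = exp (-x / A) * exp (-(P * y)) := by
      rw [← exp_add, ← exp_add]
      congr 1
      simp only [P]
      field_simp
      ring
    rw [hf, harg]
    linear_combination (Ψ / A * besselI0 (2 * √(Q * y))) * hexp
  have hexponent : -Z * x = -x / A + Q / P := by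
    simp only [hZ, Q, A]
    field_simp
    ring
  rw [setIntegral_congr_fun measurableSet_Ioi hintegrand, integral_const_mul,
    integral_exp_neg_mul_mul_besselI0 hP (by positivity), hΞ, hexponent, exp_add]
  field_simp

/-- Marginalization over outdated CSI: if, conditional on `Y = y`, `X` has the
noncentral-exponential density
`f(x|y) = (1/((1-ρ²)γ)) e^{-(x+ρ²y)/((1-ρ²)γ)} I₀(2ρ√(xy)/((1-ρ²)γ))`
and `Y` has density `Ψ e^{-Φ y}`, then the marginal density of `X` is `Ξ e^{-Z x}` with
`Ξ = Ψ/((1-ρ²)γ(Φ + ρ²/((1-ρ²)γ)))` and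
`Z = 1/((1-ρ²)γ) - ρ²/((1-ρ²)²γ²(Φ + ρ²/((1-ρ²)γ)))`. -/
theorem marginal_density_outdated_csi
    {ρ γ Ψ Φ : ℝ} (hρ0 : 0 ≤ ρ) (hρ1 : ρ < 1) (hγ : 0 < γ) (hΨ : 0 < Ψ) (hΦ : 0 < Φ)
    (f : ℝ → ℝ → ℝ)
    (hf : ∀ x y, f x y = (1 / ((1 - ρ ^ 2) * γ)) *
        Real.exp (-(x + ρ ^ 2 * y) / ((1 - ρ ^ 2) * γ)) *
        besselI0 (2 * ρ * Real.sqrt (x * y) / ((1 - ρ ^ 2) * γ)))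
    (Ξ Z : ℝ)
    (hΞ : Ξ = Ψ / ((1 - ρ ^ 2) * γ * (Φ + ρ ^ 2 / ((1 - ρ ^ 2) * γ))))
    (hZ : Z = 1 / ((1 - ρ ^ 2) * γ)
        - ρ ^ 2 / ((1 - ρ ^ 2) ^ 2 * γ ^ 2 * (Φ + ρ ^ 2 / ((1 - ρ ^ 2) * γ)))) :
    ∀ x : ℝ, 0 ≤ x →
      (∫ y in Ioi (0 : ℝ), f x y * (Ψ * Real.exp (-Φ * y))) = Ξ * Real.exp (-Z * x) :=
  marginal_density_outdated_csi_general hρ0 hρ1 hγ hΦ f hf Ξ Z hΞ hZ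
end

section
/- Fix constants E_S, E_R, Ẽ_H, E_T, Pr_R, W, T, T_R > 0 and Δ ∈ (0,1). The function g(T_S) = E_S W T_S² + E_R T_R W T_S + (Δ^{T_S W} Pr_R E_T − Ẽ_H (1 − Δ^{T_S W}))(T − T_S) is convex on [0, T]; specifically g''(T_S) = 2 E_S W − Δ^{T_S W}(Ẽ_H + E_T Pr_R) W ln(Δ)(2 − (T − T_S) W ln(Δ)) ≥ 0. -/
open Real Set

/-!
Writing `Δ ^ (T_S W) = exp (c T_S)` with `c = W log Δ ≤ 0`, the objective becomes
`a x² + b x + (A e^{cx} - e)(T - x)` with `a, A ≥ 0`, whose second derivative is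
`2a - A c e^{cx} (2 - c (T - x))`. For `x ≤ T` both `-A c e^{cx}` and `2 - c (T - x)` are
nonnegative, so the second derivative is nonnegative and the objective is convex.
-/

theorem iteratedDeriv_two_eq_of_hasDerivAt {f f' f'' : ℝ → ℝ}
    (hf : ∀ x, HasDerivAt f (f' x) x) (hf' : ∀ x, HasDerivAt f' (f'' x) x) (x : ℝ) :
    iteratedDeriv 2 f x = f'' x := by
  have hderiv : deriv f = f' := funext fun y => (hf y).deriv
  rw [iteratedDeriv_succ, iteratedDeriv_one, hderiv, (hf' x).deriv]

theorem convexOn_of_hasDerivAt2_nonneg {D : Set ℝ} (hD : Convex ℝ D) {f f' f'' : ℝ → ℝ}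
    (hf : ∀ x, HasDerivAt f (f' x) x) (hf' : ∀ x, HasDerivAt f' (f'' x) x)
    (hf''_nonneg : ∀ x ∈ D, 0 ≤ f'' x) : ConvexOn ℝ D f := by
  have hderiv : deriv f = f' := funext fun y => (hf y).deriv
  refine convexOn_of_deriv2_nonneg' hD (fun x _ => (hf x).differentiableAt.differentiableWithinAt)
    (fun x _ => ?_) (fun x hx => ?_)
  · rw [hderiv]
    exact (hf' x).differentiableAt.differentiableWithinAt
  · rw [← iteratedDeriv_eq_iterate, iteratedDeriv_two_eq_of_hasDerivAt hf hf']
    exact hf''_nonneg x hx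

noncomputable section

namespace EnergyObjective

variable (a b A c e T : ℝ)

def objective (x : ℝ) : ℝ :=
  a * x ^ 2 + b * x + (A * exp (c * x) - e) * (T - x)

def objectiveDeriv (x : ℝ) : ℝ :=
  2 * a * x + b + A * c * exp (c * x) * (T - x) - (A * exp (c * x) - e)

def objectiveDeriv2 (x : ℝ) : ℝ :=
  2 * a - A * c * exp (c * x) * (2 - c * (T - x))

theorem hasDerivAt_exp_const_mul (x : ℝ) :
    HasDerivAt (fun x => exp (c * x)) (c * exp (c * x)) x := by
  simpa [mul_comm] using ((hasDerivAt_id' x).const_mul c).exp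

theorem hasDerivAt_objective (x : ℝ) :
    HasDerivAt (objective a b A c e T) (objectiveDeriv a b A c e T x) x := by
  have hquad := ((hasDerivAt_pow 2 x).const_mul a).add ((hasDerivAt_id' x).const_mul b)
  have hprod := (((hasDerivAt_exp_const_mul c x).const_mul A).sub_const e).mul
    ((hasDerivAt_id' x).const_sub T)
  refine (hquad.add hprod).congr_deriv ?_
  simp only [objectiveDeriv]
  ring

theorem hasDerivAt_objectiveDeriv (x : ℝ) :
    HasDerivAt (objectiveDeriv a b A c e T) (objectiveDeriv2 a A c T x) x := by
  have hexp := hasDerivAt_exp_const_mul c x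
  have hlin := ((hasDerivAt_id' x).const_mul (2 * a)).add_const b
  have hprod := (hexp.const_mul (A * c)).mul ((hasDerivAt_id' x).const_sub T)
  refine ((hlin.add hprod).sub ((hexp.const_mul A).sub_const e)).congr_deriv ?_
  simp only [objectiveDeriv2]
  ring

variable {a A c T} in
theorem objectiveDeriv2_nonneg (ha : 0 ≤ a) (hA : 0 ≤ A) (hc : c ≤ 0) {x : ℝ} (hx : x ≤ T) :
    0 ≤ objectiveDeriv2 a A c T x := by
  have hslope : A * c * exp (c * x) ≤ 0 :=
    mul_nonpos_of_nonpos_of_nonneg (mul_nonpos_of_nonneg_of_nonpos hA hc) (exp_pos _).le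
  have hfactor : 0 ≤ 2 - c * (T - x) := by
    linarith [mul_nonpos_of_nonpos_of_nonneg hc (sub_nonneg.mpr hx)]
  unfold objectiveDeriv2
  linarith [mul_nonpos_of_nonpos_of_nonneg hslope hfactor]

end EnergyObjective

end

open EnergyObjective in
theorem energy_objective_convex_general
    {ES ER EH ET PrR W T TR Δ : ℝ}
    (hES : 0 < ES) (hEH : 0 < EH) (hET : 0 < ET) (hPrR : 0 < PrR)
    (hW : 0 < W) (hΔ0 : 0 < Δ) (hΔ1 : Δ < 1)
    (g : ℝ → ℝ)
    (hg : ∀ TS : ℝ, g TS = ES * W * TS ^ 2 + ER * TR * W * TS +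
        (Δ ^ (TS * W) * PrR * ET - EH * (1 - Δ ^ (TS * W))) * (T - TS)) :
    ConvexOn ℝ (Icc 0 T) g
    ∧ ∀ TS ∈ Icc (0 : ℝ) T,
        iteratedDeriv 2 g TS
          = 2 * ES * W - Δ ^ (TS * W) * (EH + ET * PrR) * W * Real.log Δ *
              (2 - (T - TS) * W * Real.log Δ)
        ∧ 0 ≤ iteratedDeriv 2 g TS := by
  set c := W * log Δ with hc_def
  set A := EH + ET * PrR
  have hc : c ≤ 0 := mul_nonpos_of_nonneg_of_nonpos hW.le (log_neg hΔ0 hΔ1).le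
  have hA : 0 ≤ A := by positivity
  have hrpow (x : ℝ) : Δ ^ (x * W) = exp (c * x) := by
    rw [rpow_def_of_pos hΔ0, hc_def]
    ring_nf
  have hg_eq : g = objective (ES * W) (ER * TR * W) A c EH T := by
    funext x
    rw [hg, objective, hrpow]
    ring
  have hg'' (x : ℝ) : iteratedDeriv 2 g x = objectiveDeriv2 (ES * W) A c T x := by
    rw [hg_eq]
    exact iteratedDeriv_two_eq_of_hasDerivAt (hasDerivAt_objective _ _ _ _ _ _)
      (hasDerivAt_objectiveDeriv _ _ _ _ _ _) x
  have hnonneg (x : ℝ) (hx : x ∈ Icc 0 T) : 0 ≤ objectiveDeriv2 (ES * W) A c T x :=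
    objectiveDeriv2_nonneg (by positivity) hA hc hx.2
  refine ⟨?_, fun x hx => ⟨?_, hg'' x ▸ hnonneg x hx⟩⟩
  · rw [hg_eq]
    exact convexOn_of_hasDerivAt2_nonneg (convex_Icc 0 T) (hasDerivAt_objective _ _ _ _ _ _)
      (hasDerivAt_objectiveDeriv _ _ _ _ _ _) hnonneg
  · rw [hg'', objectiveDeriv2, hrpow]
    ring

/-- Convexity of the average energy-consumption objective in the sensing time `T_S`:
`g(T_S) = E_S W T_S² + E_R T_R W T_S + (Δ^{T_S W} Pr_R E_T − Ẽ_H(1 − Δ^{T_S W}))(T − T_S)`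
is convex on `[0,T]`, with
`g''(T_S) = 2E_S W − Δ^{T_S W}(Ẽ_H + E_T Pr_R) W ln Δ (2 − (T − T_S) W ln Δ) ≥ 0`. -/
theorem energy_objective_convex
    {ES ER EH ET PrR W T TR Δ : ℝ}
    (hES : 0 < ES) (hER : 0 < ER) (hEH : 0 < EH) (hET : 0 < ET) (hPrR : 0 < PrR)
    (hW : 0 < W) (hT : 0 < T) (hTR : 0 < TR) (hΔ0 : 0 < Δ) (hΔ1 : Δ < 1)
    (g : ℝ → ℝ)
    (hg : ∀ TS : ℝ, g TS = ES * W * TS ^ 2 + ER * TR * W * TS +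
        (Δ ^ (TS * W) * PrR * ET - EH * (1 - Δ ^ (TS * W))) * (T - TS)) :
    ConvexOn ℝ (Icc 0 T) g
    ∧ ∀ TS ∈ Icc (0 : ℝ) T,
        iteratedDeriv 2 g TS
          = 2 * ES * W - Δ ^ (TS * W) * (EH + ET * PrR) * W * Real.log Δ *
              (2 - (T - TS) * W * Real.log Δ)
        ∧ 0 ≤ iteratedDeriv 2 g TS :=
  energy_objective_convex_general hES hEH hET hPrR hW hΔ0 hΔ1 g hg
end
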